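/- A shift space X ⊆ A^ℤ admits a finite string attractor if and only if X is a finite union of orbits of purely periodic words, i.e., a finite union of sets of the form {S^k(x) : k ∈ ℤ} with x purely periodic. In particular, such an X is finite. -/

import Mathlib

open scoped ENat Classical

/-- The length-`n` factor of the bi-infinite word `x` starting at position `i`. -/
def subwordZ {A : Type*} (x : ℤ → A) (i : ℤ) (n : ℕ) : List A :=
  (List.range n).map fun j => x (i + (j : ℤ))

/-- `w` occurs in `x` at position `i`. -/
def occursAt {A : Type*} (x : ℤ → A) (w : List A) (i : ℤ) : Prop :=
  subwordZ x i w.length = w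

/-- `w` is a factor of the bi-infinite word `x`. -/
def IsFactorZ {A : Type*} (x : ℤ → A) (w : List A) : Prop :=
  ∃ i : ℤ, occursAt x w i

/-- `Γ` is a string attractor of the bi-infinite word `x`: every nonempty factor
has an occurrence crossing a position of `Γ`. -/
def IsAttractorZ {A : Type*} (x : ℤ → A) (Γ : Set ℤ) : Prop :=
  ∀ w : List A, w ≠ [] → IsFactorZ x w →
    ∃ i : ℤ, occursAt x w i ∧ ∃ p ∈ Γ, i ≤ p ∧ p < i + (w.length : ℤ)

/-- The span `sup Γ - inf Γ` of a set of integers (`⊤` when unbounded). -/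
noncomputable def setSpan (Γ : Set ℤ) : ℕ∞ :=
  ⨆ a ∈ Γ, ⨆ b ∈ Γ, ((b - a).toNat : ℕ∞)

/-- The string attractor span of a bi-infinite word. -/
noncomputable def wordSpan {A : Type*} (x : ℤ → A) : ℕ∞ :=
  ⨅ Γ ∈ {Γ : Set ℤ | IsAttractorZ x Γ}, setSpan Γ

/-- The factor complexity of a bi-infinite word. -/
noncomputable def complexityZ {A : Type*} (x : ℤ → A) (n : ℕ) : ℕ :=
  Nat.card {w : List A // w.length = n ∧ IsFactorZ x w}

/-- The shift `S^k`. -/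
def shiftZ {A : Type*} (k : ℤ) (x : ℤ → A) : ℤ → A := fun i => x (i + k)

def PositivelyPeriodicZ {A : Type*} (x : ℤ → A) : Prop :=
  ∃ (N : ℤ) (p : ℕ), 1 ≤ p ∧ ∀ n : ℤ, N ≤ n → x n = x (n + (p : ℤ))

def NegativelyPeriodicZ {A : Type*} (x : ℤ → A) : Prop :=
  ∃ (N : ℤ) (p : ℕ), 1 ≤ p ∧ ∀ n : ℤ, n ≤ N → x n = x (n - (p : ℤ))

def EventuallyPeriodicZ {A : Type*} (x : ℤ → A) : Prop :=
  PositivelyPeriodicZ x ∨ NegativelyPeriodicZ x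

def AperiodicZ {A : Type*} (x : ℤ → A) : Prop := ¬ EventuallyPeriodicZ x

def PurelyPeriodicZ {A : Type*} (x : ℤ → A) : Prop :=
  ∃ p : ℕ, 1 ≤ p ∧ ∀ n : ℤ, x n = x (n + (p : ℤ))

def LeftSpecialZ {A : Type*} (x : ℤ → A) (u : List A) : Prop :=
  ∃ a b : A, a ≠ b ∧ IsFactorZ x (a :: u) ∧ IsFactorZ x (b :: u)

def RightSpecialZ {A : Type*} (x : ℤ → A) (u : List A) : Prop :=
  ∃ a b : A, a ≠ b ∧ IsFactorZ x (u ++ [a]) ∧ IsFactorZ x (u ++ [b])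

def BispecialZ {A : Type*} (x : ℤ → A) (u : List A) : Prop :=
  LeftSpecialZ x u ∧ RightSpecialZ x u

/-- A bi-infinite word over `{0,1}` is Sturmian if it is aperiodic with complexity `n + 1`. -/
def SturmianZ (x : ℤ → Fin 2) : Prop :=
  AperiodicZ x ∧ ∀ n : ℕ, complexityZ x n = n + 1

/-- `x_{[-n, n+1]} = r_n(x) 01 l_n(x)` for all `n`. -/
def UpperCharacteristic (x : ℤ → Fin 2) : Prop :=
  SturmianZ x ∧ ∀ n : ℕ, ∃ r l : List (Fin 2),
    r.length = n ∧ RightSpecialZ x r ∧ l.length = n ∧ LeftSpecialZ x l ∧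
    subwordZ x (-(n : ℤ)) (2 * n + 2) = r ++ [0, 1] ++ l

/-- `x_{[-n, n+1]} = r_n(x) 10 l_n(x)` for all `n`. -/
def LowerCharacteristic (x : ℤ → Fin 2) : Prop :=
  SturmianZ x ∧ ∀ n : ℕ, ∃ r l : List (Fin 2),
    r.length = n ∧ RightSpecialZ x r ∧ l.length = n ∧ LeftSpecialZ x l ∧
    subwordZ x (-(n : ℤ)) (2 * n + 2) = r ++ [1, 0] ++ l

def CharacteristicSturmian (x : ℤ → Fin 2) : Prop :=
  UpperCharacteristic x ∨ LowerCharacteristic x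

def QuasiSturmianZ {A : Type*} (x : ℤ → A) : Prop :=
  AperiodicZ x ∧ ∃ (n₀ k : ℕ), 1 ≤ k ∧ ∀ n : ℕ, n₀ ≤ n → complexityZ x n = n + k

/-- Starting position in `φ(x)` of the image `φ(x_i)` (image of `x_0` starts at `0`). -/
def blockStart {A B : Type*} (φ : A → List B) (x : ℤ → A) (i : ℤ) : ℤ :=
  if 0 ≤ i then ((List.range i.toNat).map fun j => ((φ (x (j : ℤ))).length : ℤ)).sum
  else -((List.range (-i).toNat).map fun j => ((φ (x (-(j : ℤ) - 1))).length : ℤ)).sum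

/-- `y` is the image of the bi-infinite word `x` under the substitution `φ`
(with images of letters nonempty). -/
def IsSubstImage {A B : Type*} (φ : A → List B) (x : ℤ → A) (y : ℤ → B) : Prop :=
  (∀ a : A, φ a ≠ []) ∧
  ∀ i : ℤ, subwordZ y (blockStart φ x i) (φ (x i)).length = φ (x i)

/-- `φ_x(Γ)`: positions of `φ(x)` occupied by images of letters at positions in `Γ`. -/
def substSupp {A B : Type*} (φ : A → List B) (x : ℤ → A) (Γ : Set ℤ) : Set ℤ :=
  {n : ℤ | ∃ i ∈ Γ, blockStart φ x i ≤ n ∧ n < blockStart φ x i + ((φ (x i)).length : ℤ)}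

/-- `φ_x^{-1}(Γ)`: positions of letters of `x` whose image blocks in `φ(x)` meet `Γ`. -/
def substPreimage {A B : Type*} (φ : A → List B) (x : ℤ → A) (Γ : Set ℤ) : Set ℤ :=
  {i : ℤ | ∃ n ∈ Γ, blockStart φ x i ≤ n ∧ n < blockStart φ x i + ((φ (x i)).length : ℤ)}

/-- The set of occurrences of `w` in the finite word `u`. -/
def occSetF {B : Type*} (u w : List B) : Set ℕ :=
  {i : ℕ | i + w.length ≤ u.length ∧ (u.drop i).take w.length = w}

/-- `φ` is a return morphism for `w`. -/
def IsReturnMorphism {A B : Type*} (φ : A → List B) (w : List B) : Prop :=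
  w ≠ [] ∧ Function.Injective φ ∧ (∀ a : A, φ a ≠ []) ∧
  ∀ a : A, occSetF (w ++ φ a) w = {0, (φ a).length}

def listPow {A : Type*} (u : List A) : ℕ → List A
  | 0 => []
  | n + 1 => u ++ listPow u n

/-- A substitution on `{0,1}` is acyclic if `φ(0)` and `φ(1)` are not powers of one word. -/
def AcyclicSubst {A : Type*} (φ : Fin 2 → List A) : Prop :=
  ¬ ∃ (u : List A) (m n : ℕ), φ 0 = listPow u m ∧ φ 1 = listPow u n

/-- The substitution `L₀ : 0 ↦ 0, 1 ↦ 01`. -/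
def Lzero : Fin 2 → List (Fin 2) := fun a => if a = 0 then [0] else [0, 1]

/-- The substitution `L₁ : 0 ↦ 10, 1 ↦ 1`. -/
def Lone : Fin 2 → List (Fin 2) := fun a => if a = 0 then [1, 0] else [1]

/-- A finite word has period `r`. -/
def PeriodicF {A : Type*} (w : List A) (r : ℕ) : Prop :=
  ∀ i : ℕ, i + r < w.length → w[i]? = w[i + r]?

/-- `Γ` is a string attractor of the finite word `w`. -/
def IsAttractorF {A : Type*} (w : List A) (Γ : Set ℕ) : Prop :=
  ∀ u : List A, u ≠ [] → u <:+: w →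
    ∃ i : ℕ, i + u.length ≤ w.length ∧ (w.drop i).take u.length = u ∧
      ∃ p ∈ Γ, i ≤ p ∧ p < i + u.length

def RecurrentZ {A : Type*} (x : ℤ → A) : Prop :=
  ∀ w : List A, IsFactorZ x w → {i : ℤ | occursAt x w i}.Infinite

def UniformlyRecurrentZ {A : Type*} (x : ℤ → A) : Prop :=
  ∀ w : List A, IsFactorZ x w →
    ∃ n : ℕ, ∀ i : ℤ, ∃ j : ℤ, i ≤ j ∧ j + (w.length : ℤ) ≤ i + (n : ℤ) ∧ occursAt x w j

def ModuloRecurrentZ {A : Type*} (x : ℤ → A) : Prop :=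
  ∀ w : List A, IsFactorZ x w → ∀ k : ℕ, 1 ≤ k → ∀ r : ℤ,
    ∃ i : ℤ, occursAt x w i ∧ (k : ℤ) ∣ (i - r)

/-- A shift space: closed (product topology, `A` discrete) and shift-invariant. -/
def IsShiftSpace {A : Type*} (X : Set (ℤ → A)) : Prop :=
  @IsClosed _ (@Pi.topologicalSpace ℤ (fun _ => A) (fun _ => ⊥)) X ∧ shiftZ 1 '' X = X

def IsAttractorX {A : Type*} (X : Set (ℤ → A)) (Γ : Set ℤ) : Prop :=
  ∀ x ∈ X, IsAttractorZ x Γ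

def MinimalShift {A : Type*} (X : Set (ℤ → A)) : Prop :=
  IsShiftSpace X ∧ ∀ Y ⊆ X, IsShiftSpace Y → Y = ∅ ∨ Y = X

/-- The orbit closure of a bi-infinite word (product topology, `A` discrete). -/
def orbitClosureZ {A : Type*} (x : ℤ → A) : Set (ℤ → A) :=
  @closure _ (@Pi.topologicalSpace ℤ (fun _ => A) (fun _ => ⊥)) {y | ∃ k : ℤ, y = shiftZ k x}

/-! If every factor of length `n` of `x` occurs starting in every interval of `n + s + 1`
positions (which a string attractor inside `[m, m + s]` guarantees for every word of a
shift-invariant set), then `x` has a period at most `6 s + 9`. Indeed, if `x` is not `d`-periodic,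
a run of period `d` in `x` has length at most `d + s + 1`. So a return `g n ≤ n + s + 1` of the
prefix of length `n` satisfies `g n ≥ n - s - 1`, and two returns of that prefix are at least
`n - s - 1` apart. For `n ≥ 3 s + 5` this forces `g (n + 1) = g n`: the returns stabilise,
contradicting `g n ≥ n - s - 1`.

Bounded periods make the shift space finite, hence a finite union of periodic orbits. Conversely,
a finite union of orbits of words with periods `p i` has the attractor `[0, ∑ i, p i)`. -/

open Function

section

variable {A : Type*}

theorem purelyPeriodicZ_iff {x : ℤ → A} :
    PurelyPeriodicZ x ↔ ∃ p : ℕ, 0 < p ∧ Periodic x p := by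
  simp only [PurelyPeriodicZ, Periodic, Nat.one_le_iff_ne_zero, Nat.pos_iff_ne_zero, eq_comm]

theorem shiftZ_zero (x : ℤ → A) : shiftZ 0 x = x := by
  funext i; simp [shiftZ]

theorem shiftZ_shiftZ (k l : ℤ) (x : ℤ → A) : shiftZ k (shiftZ l x) = shiftZ (k + l) x := by
  funext i; simp [shiftZ, add_assoc]

theorem shiftZ_mem_of_image_eq {X : Set (ℤ → A)} (hX : shiftZ 1 '' X = X) (k : ℤ) {x : ℤ → A}
    (hx : x ∈ X) : shiftZ k x ∈ X := by
  have hsucc : ∀ y ∈ X, shiftZ 1 y ∈ X := fun y hy => hX ▸ Set.mem_image_of_mem _ hy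
  have hpred : ∀ y ∈ X, shiftZ (-1) y ∈ X := by
    intro y hy
    obtain ⟨z, hz, rfl⟩ := hX.symm ▸ hy
    simpa [shiftZ_shiftZ, shiftZ_zero] using hz
  induction k using Int.induction_on with
  | zero => simpa [shiftZ_zero] using hx
  | succ n ih => simpa [shiftZ_shiftZ, add_comm] using hsucc _ ih
  | pred n ih => simpa [shiftZ_shiftZ, sub_eq_neg_add] using hpred _ ih

theorem subwordZ_eq_map (x : ℤ → A) (i : ℤ) (n : ℕ) :
    subwordZ x i n = (List.range n).map fun t : ℕ => x (i + t) := by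
  simp only [subwordZ, List.bind_eq_flatMap, List.pure_def, ← List.map_eq_flatMap, List.map_map]
  rfl

theorem length_subwordZ (x : ℤ → A) (i : ℤ) (n : ℕ) : (subwordZ x i n).length = n := by
  simp [subwordZ_eq_map]

theorem subwordZ_eq_subwordZ_iff {x y : ℤ → A} {i j : ℤ} {n : ℕ} :
    subwordZ x i n = subwordZ y j n ↔ ∀ t : ℕ, t < n → x (i + t) = y (j + t) := by
  simp only [subwordZ_eq_map, List.map_inj_left, List.mem_range]

theorem occursAt_subwordZ_iff {x y : ℤ → A} {i k : ℤ} {n : ℕ} :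
    occursAt y (subwordZ x i n) k ↔ ∀ t : ℕ, t < n → y (k + t) = x (i + t) := by
  rw [occursAt, length_subwordZ, subwordZ_eq_subwordZ_iff]

theorem IsAttractorZ.mono {x : ℤ → A} {Γ Γ' : Set ℤ} (h : IsAttractorZ x Γ) (hΓ : Γ ⊆ Γ') :
    IsAttractorZ x Γ' := fun w hw hwx => by
  obtain ⟨i, hi, q, hq, hiq⟩ := h w hw hwx
  exact ⟨i, hi, q, hΓ hq, hiq⟩

theorem isAttractorZ_Ico_of_periodic {x : ℤ → A} {p : ℤ} (hp : 0 < p) (hx : Periodic x p) :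
    IsAttractorZ x (Set.Ico 0 p) := by
  rintro w hw ⟨i, hi⟩
  have hw_len := List.length_pos_of_ne_nil hw
  refine ⟨i % p, ?_, i % p, ⟨Int.emod_nonneg i hp.ne', Int.emod_lt_of_pos i hp⟩, le_rfl, by omega⟩
  refine Eq.trans (subwordZ_eq_subwordZ_iff.2 fun t _ => ?_) hi
  rw [← hx.sub_int_mul_eq (i / p) (x := i + t), Int.emod_def, Int.cast_id]
  ring_nf

def IsWindowRecurrent (s : ℕ) (x : ℤ → A) : Prop :=
  ∀ (n : ℕ) (i j : ℤ), ∃ k, j ≤ k ∧ k ≤ j + n + s ∧ ∀ t : ℕ, t < n → x (k + t) = x (i + t)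

theorem Set.Finite.exists_subset_Icc {Γ : Set ℤ} (hΓ : Γ.Finite) :
    ∃ (m : ℤ) (s : ℕ), Γ ⊆ Set.Icc m (m + s) := by
  obtain ⟨m, hm⟩ := hΓ.bddBelow
  obtain ⟨M, hM⟩ := hΓ.bddAbove
  exact ⟨m, (M - m).toNat, fun q hq => ⟨hm hq, by have := hM hq; omega⟩⟩

theorem IsAttractorX.isWindowRecurrent {X : Set (ℤ → A)} (hX : ∀ k, ∀ x ∈ X, shiftZ k x ∈ X)
    {Γ : Set ℤ} (hΓX : IsAttractorX X Γ) {m : ℤ} {s : ℕ} (hΓ : Γ ⊆ Set.Icc m (m + s))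
    {x : ℤ → A} (hx : x ∈ X) : IsWindowRecurrent s x := by
  intro n i j
  rcases n.eq_zero_or_pos with rfl | hn
  · exact ⟨j, le_rfl, by omega, fun t ht => absurd ht t.not_lt_zero⟩
  -- an occurrence in `shiftZ k₀ x` crossing `[m, m + s]` starts in `[j, j + n + s - 1]` in `x`
  set k₀ := j + n - 1 - m
  have hfactor : IsFactorZ (shiftZ k₀ x) (subwordZ x i n) :=
    ⟨i - k₀, occursAt_subwordZ_iff.2 fun t _ => by simp only [shiftZ]; ring_nf⟩
  obtain ⟨k, hk, q, hqΓ, hkq, hqk⟩ := hΓX _ (hX k₀ x hx) _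
    (List.ne_nil_of_length_pos (by rwa [length_subwordZ])) hfactor
  obtain ⟨hmq, hqm⟩ := hΓ hqΓ
  rw [length_subwordZ] at hqk
  refine ⟨k + k₀, by omega, by omega, fun t ht => ?_⟩
  rw [← occursAt_subwordZ_iff.1 hk t ht]
  simp only [shiftZ]
  ring_nf

section WindowRecurrent

variable {s : ℕ} {x : ℤ → A}

theorem IsWindowRecurrent.sub_le_of_run (hx : IsWindowRecurrent s x) {d : ℕ}
    (hd : ¬ Periodic x d) {a b : ℤ} (hrun : ∀ t ∈ Set.Ico a b, x (t + d) = x t) :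
    b - a ≤ d + s + 1 := by
  obtain ⟨t₀, ht₀⟩ : ∃ t₀, x (t₀ + d) ≠ x t₀ := by simpa [Periodic] using hd
  obtain ⟨k, hak, hka, hk⟩ := hx (d + 1) t₀ a
  by_contra! hab
  have hk₀ : x k = x t₀ := by simpa using hk 0 (by omega)
  exact ht₀ ((hk d (by omega)).symm.trans ((hrun k ⟨hak, by omega⟩).trans hk₀))

theorem IsWindowRecurrent.le_of_recurs (hx : IsWindowRecurrent s x) {n : ℤ} {g g' : ℕ}
    (hgg' : g < g') (hd : ¬ Periodic x (g' - g : ℕ))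
    (hg : ∀ t ∈ Set.Ico 0 n, x (t + g) = x t) (hg' : ∀ t ∈ Set.Ico 0 n, x (t + g') = x t) :
    n ≤ (g' - g : ℕ) + s + 1 := by
  have := hx.sub_le_of_run hd (a := g) (b := g + n) fun t ht => by
    have ht' : t - g ∈ Set.Ico 0 n := ⟨by linarith [ht.1], by linarith [ht.2]⟩
    rw [show t + ((g' - g : ℕ) : ℤ) = t - g + g' by push_cast [hgg'.le]; ring, hg' _ ht',
      ← hg _ ht', sub_add_cancel]
  omega

-- `6 * s + 9` bounds every period the argument below has to rule out.
theorem IsWindowRecurrent.exists_periodic (hx : IsWindowRecurrent s x) :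
    ∃ p : ℕ, 0 < p ∧ p ≤ 6 * s + 9 ∧ Periodic x p := by
  by_contra! haper
  have hreturn : ∀ n : ℕ, ∃ g : ℕ, 0 < g ∧ g ≤ n + s + 1 ∧
      ∀ t ∈ Set.Ico (0 : ℤ) n, x (t + g) = x t := by
    intro n
    obtain ⟨k, h1k, hk, hkn⟩ := hx n 0 1
    refine ⟨k.toNat, by omega, by omega, fun t ⟨ht₀, htn⟩ => ?_⟩
    have := hkn t.toNat (by omega)
    rwa [Int.toNat_of_nonneg ht₀, zero_add, add_comm, ← Int.toNat_of_nonneg (by omega : 0 ≤ k)]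
      at this
  choose g hg_pos hg_le hg using hreturn
  have hg_ge : ∀ n : ℕ, g n ≤ 6 * s + 9 → n ≤ g n + s + 1 := fun n hn => by
    have := hx.le_of_recurs (hg_pos n) (by simpa using haper _ (hg_pos n) hn)
      (by simp) (hg n)
    omega
  have hstep : ∀ n : ℕ, 3 * s + 5 ≤ n → n ≤ 5 * s + 7 → g (n + 1) = g n := by
    intro n hn hnB
    have hg' : ∀ t ∈ Set.Ico (0 : ℤ) n, x (t + g (n + 1)) = x t :=
      fun t ht => hg (n + 1) t ⟨ht.1, by push_cast; linarith [ht.2]⟩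
    have hle := hg_le n
    have hle' := hg_le (n + 1)
    have hge := hg_ge n (by omega)
    have hge' := hx.le_of_recurs (hg_pos (n + 1))
      (by simpa using haper _ (hg_pos _) (by omega)) (by simp) hg'
    rcases lt_trichotomy (g n) (g (n + 1)) with h | h | h
    · have := hx.le_of_recurs h (haper _ (by omega) (by omega)) (hg n) hg'
      omega
    · exact h.symm
    · have := hx.le_of_recurs h (haper _ (by omega) (by omega)) hg' (hg n)
      omega
  have hconst : ∀ n : ℕ, 3 * s + 5 ≤ n → n ≤ 5 * s + 8 → g n = g (3 * s + 5) := by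
    intro n hn
    induction n, hn using Nat.le_induction with
    | base => exact fun _ => rfl
    | succ n hn ih => exact fun h => (hstep n hn (by omega)).trans (ih (by omega))
  set g₀ := g (3 * s + 5)
  have hg₀ := hg_le (3 * s + 5)
  have hN := hconst (g₀ + s + 2) (by have := hg_ge (3 * s + 5) (by omega); omega) (by omega)
  have := hx.le_of_recurs (hg_pos _) (by simpa using haper g₀ (hg_pos _) (by omega)) (by simp)
    (hN ▸ hg (g₀ + s + 2))
  omega

end WindowRecurrent

theorem finite_setOf_periodic [Finite A] {p : ℕ} (hp : 0 < p) :
    {x : ℤ → A | Periodic x p}.Finite := by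
  refine Set.Finite.of_finite_image (f := fun x (i : Fin p) => x i) (Set.toFinite _) ?_
  intro x hx y hy hxy
  funext t
  have hmod : (((t % p).toNat : ℕ) : ℤ) = t % p :=
    Int.toNat_of_nonneg (Int.emod_nonneg t (by omega))
  have hlt : (t % p).toNat < p := by have := Int.emod_lt_of_pos t (by omega : (0 : ℤ) < p); omega
  have hxt : ∀ z : ℤ → A, Periodic z p → z t = z (((t % p).toNat : ℕ) : ℤ) := fun z hz => by
    rw [hmod, Int.emod_def, mul_comm, ← Int.cast_id (n := t / p), hz.sub_int_mul_eq]
  rw [hxt x hx, hxt y hy]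
  exact congrFun hxy ⟨_, hlt⟩

theorem Set.Finite.of_forall_periodic_le [Finite A] {X : Set (ℤ → A)} {B : ℕ}
    (h : ∀ x ∈ X, ∃ p : ℕ, 0 < p ∧ p ≤ B ∧ Periodic x p) : X.Finite := by
  refine ((Set.finite_Icc 1 B).biUnion fun p hp => finite_setOf_periodic hp.1).subset ?_
  intro x hx
  obtain ⟨p, hp, hpB, hxp⟩ := h x hx
  exact Set.mem_biUnion (show p ∈ Set.Icc 1 B from ⟨hp, hpB⟩) hxp

theorem Set.Finite.exists_eq_iUnion_orbits {X : Set (ℤ → A)} (hfin : X.Finite)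
    (hX : ∀ k, ∀ x ∈ X, shiftZ k x ∈ X) :
    ∃ (N : ℕ) (f : Fin N → (ℤ → A)), (∀ i, f i ∈ X) ∧
      X = ⋃ i : Fin N, {y : ℤ → A | ∃ k : ℤ, y = shiftZ k (f i)} := by
  obtain ⟨N, f, hf⟩ := hfin.fin_embedding
  have hfX : ∀ i, f i ∈ X := fun i => hf ▸ Set.mem_range_self i
  refine ⟨N, f, hfX, Set.Subset.antisymm (fun x hx => ?_) ?_⟩
  · obtain ⟨i, rfl⟩ := hf.symm ▸ hx
    exact Set.mem_iUnion.2 ⟨i, 0, (shiftZ_zero _).symm⟩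
  · rintro _ ⟨_, ⟨i, rfl⟩, k, rfl⟩
    exact hX k _ (hfX i)

theorem exists_finite_isAttractorX_iUnion_orbits {N : ℕ} {f : Fin N → (ℤ → A)}
    (hf : ∀ i, PurelyPeriodicZ (f i)) :
    ∃ Γ : Set ℤ, Γ.Finite ∧
      IsAttractorX (⋃ i : Fin N, {y : ℤ → A | ∃ k : ℤ, y = shiftZ k (f i)}) Γ := by
  choose p hp hfp using fun i => purelyPeriodicZ_iff.1 (hf i)
  refine ⟨Set.Ico 0 (∑ i, p i : ℕ), Set.finite_Ico _ _, ?_⟩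
  rintro _ ⟨_, ⟨i, rfl⟩, k, rfl⟩
  refine (isAttractorZ_Ico_of_periodic (by exact_mod_cast hp i) ((hfp i).add_const k)).mono ?_
  exact Set.Ico_subset_Ico_right
    (by exact_mod_cast Finset.single_le_sum (by simp) (Finset.mem_univ i))

end

/-- A shift space admits a finite string attractor iff it is a finite union of
orbits of purely periodic words; in particular such a shift space is finite. -/
theorem shift_space_finite_attractor {A : Type*} [Fintype A] (X : Set (ℤ → A))
    (hX : IsShiftSpace X) :
    ((∃ Γ : Set ℤ, Γ.Finite ∧ IsAttractorX X Γ) ↔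
      ∃ (N : ℕ) (f : Fin N → (ℤ → A)), (∀ i, PurelyPeriodicZ (f i)) ∧
        X = ⋃ i : Fin N, {y : ℤ → A | ∃ k : ℤ, y = shiftZ k (f i)}) ∧
    ((∃ Γ : Set ℤ, Γ.Finite ∧ IsAttractorX X Γ) → X.Finite) := by
  have hshift : ∀ k, ∀ x ∈ X, shiftZ k x ∈ X := fun k _ hx => shiftZ_mem_of_image_eq hX.2 k hx
  have hperiodic : (∃ Γ : Set ℤ, Γ.Finite ∧ IsAttractorX X Γ) →
      ∃ B, ∀ x ∈ X, ∃ p : ℕ, 0 < p ∧ p ≤ B ∧ Periodic x p := by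
    rintro ⟨Γ, hΓ, hΓX⟩
    obtain ⟨m, s, hms⟩ := hΓ.exists_subset_Icc
    exact ⟨6 * s + 9, fun x hx => (hΓX.isWindowRecurrent hshift hms hx).exists_periodic⟩
  have hfinite : (∃ Γ : Set ℤ, Γ.Finite ∧ IsAttractorX X Γ) → X.Finite := fun h => by
    obtain ⟨B, hB⟩ := hperiodic h
    exact Set.Finite.of_forall_periodic_le hB
  refine ⟨⟨fun h => ?_, ?_⟩, hfinite⟩
  · obtain ⟨N, f, hfX, hXf⟩ := (hfinite h).exists_eq_iUnion_orbits hshift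
    obtain ⟨B, hB⟩ := hperiodic h
    refine ⟨N, f, fun i => purelyPeriodicZ_iff.2 ?_, hXf⟩
    obtain ⟨p, hp, -, hfp⟩ := hB _ (hfX i)
    exact ⟨p, hp, hfp⟩
  · rintro ⟨N, f, hf, rfl⟩
    exact exists_finite_isAttractorX_iUnion_orbits hf
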